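/- arXiv:2206.08725 — 3 statements merged into one kernel-verified Lean document; each statement's English description precedes it below -/
import Mathlib

section
/- Let C be a linear code of length n over R with component codes C_1, C_2, C_3, C_4, and let 0 ≤ l ≤ e−1. Then C is an l-Galois LCD code over R if and only if C_i is an l-Galois LCD code over F_q for every i = 1,2,3,4. -/
open scoped BigOperators

/-- The ring `R = F_q + uF_q + vF_q + uvF_q ≅ F_q^4` (componentwise operations). -/
abbrev RR (F : Type*) := Fin 4 → F

/-- The pairwise orthogonal idempotents `γ_1, γ_2, γ_3, γ_4` of `R`,
realized as the standard idempotents of `F_q^4`. -/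
def gam (F : Type*) [Field F] (i : Fin 4) : RR F := Pi.single i 1

/-- The `i`-th component code `C_i ⊆ F_q^n` of a code `C ⊆ R^n`. -/
def compCode {F : Type*} [Field F] {n : ℕ} (C : Set (Fin n → RR F)) (i : Fin 4) :
    Set (Fin n → F) :=
  {x | ∃ c ∈ C, ∀ j, c j i = x j}

/-- Euclidean dual of a code over `R`. -/
def euclDualR {F : Type*} [Field F] {n : ℕ} (C : Set (Fin n → RR F)) :
    Set (Fin n → RR F) :=
  {s | ∀ t ∈ C, ∑ j, t j * s j = 0}

/-- `l`-Galois dual of a code over `R`; apply with `pl = p ^ l`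
(the `l`-Galois inner product is `[t,s]_l = ∑ j, t j * (s j) ^ (p ^ l)`,
since `F^l(r) = r ^ (p ^ l)`). -/
def galDualR {F : Type*} [Field F] {n : ℕ} (pl : ℕ) (C : Set (Fin n → RR F)) :
    Set (Fin n → RR F) :=
  {s | ∀ t ∈ C, ∑ j, t j * s j ^ pl = 0}

/-- `l`-Galois dual of a code over the field `F = F_q`; apply with `pl = p ^ l`. -/
def galDualF {F : Type*} [Field F] {ι : Type*} [Fintype ι] (pl : ℕ) (D : Set (ι → F)) :
    Set (ι → F) :=
  {x | ∀ c ∈ D, ∑ j, c j * x j ^ pl = 0}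

/-- Lee weight of a vector over `R`: the sum of the Hamming weights of the
quadruples of `γ`-components of the coordinates. -/
def leeWt {F : Type*} [Field F] [DecidableEq F] {n : ℕ} (c : Fin n → RR F) : ℕ :=
  ∑ j, hammingNorm (c j)

/-- Minimum Lee distance of a code over `R`. -/
noncomputable def dLee {F : Type*} [Field F] [DecidableEq F] {n : ℕ} (C : Set (Fin n → RR F)) : ℕ :=
  sInf (leeWt '' {c ∈ C | c ≠ 0})

/-- Minimum Hamming distance of a code over `F_q`. -/
noncomputable def dHam {F : Type*} [Field F] [DecidableEq F] {ι : Type*} [Fintype ι]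
    (D : Set (ι → F)) : ℕ :=
  sInf (hammingNorm '' {x ∈ D | x ≠ 0})

/-- The Gray map `ρ : R^n → F_q^{4n}`. -/
def gray {F : Type*} [Field F] {n : ℕ} (c : Fin n → RR F) : Fin n × Fin 4 → F :=
  fun ji => c ji.1 ji.2

/-- The code `C^α = {(α_1 c_1, …, α_n c_n) : c ∈ C}` over `R`. -/
def scaleCode {F : Type*} [Field F] {n : ℕ} (α : Fin n → RR F)
    (C : Set (Fin n → RR F)) : Set (Fin n → RR F) :=
  (fun c => fun j => α j * c j) '' C

/-- The code `C^a = {(a_1 c_1, …, a_n c_n) : c ∈ C}` over `F_q`. -/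
def scaleCodeF {F : Type*} [Field F] {n : ℕ} (a : Fin n → F)
    (D : Set (Fin n → F)) : Set (Fin n → F) :=
  (fun c => fun j => a j * c j) '' D

/-- `P_S`: the submatrix of `P` obtained by deleting the rows and columns
indexed by `S` (its determinant is `1` when `S` is everything, since the
empty matrix has determinant `1`). -/
def minorOff {F : Type*} [Field F] {m : ℕ} (P : Matrix (Fin m) (Fin m) F)
    (S : Finset (Fin m)) : Matrix {i : Fin m // i ∉ S} {i : Fin m // i ∉ S} F :=
  P.submatrix (fun a => (a : Fin m)) (fun a => (a : Fin m))


/-!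
Since `R ≅ F_q^4` componentwise and the Frobenius acts componentwise, the `l`-Galois
inner product over `R` has the `l`-Galois inner products of the components as its
`γ`-components. Hence `s ∈ C^{⊥_l}` exactly when each component of `s` lies in
`C_i^{⊥_l}`. A codeword of `C ∩ C^{⊥_l}` thus has its components in `C_i ∩ C_i^{⊥_l}`;
conversely `x ∈ C_i ∩ C_i^{⊥_l}` lifts to `γ_i x ∈ C ∩ C^{⊥_l}`, because `C` is an
`R`-module.
-/

section

variable {F : Type*} [Field F] {n : ℕ}

theorem zero_mem_galDualF {ι : Type*} [Fintype ι] {pl : ℕ} (hpl : pl ≠ 0)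
    (D : Set (ι → F)) : 0 ∈ galDualF pl D := by
  intro c _
  simp [zero_pow hpl]

theorem mem_galDualR_iff {pl : ℕ} {C : Set (Fin n → RR F)} {s : Fin n → RR F} :
    s ∈ galDualR pl C ↔ ∀ i, (fun j => s j i) ∈ galDualF pl (compCode C i) := by
  constructor
  · rintro hs i x ⟨t, htC, htx⟩
    obtain rfl : (fun j => t j i) = x := funext htx
    simpa [Finset.sum_apply] using congrFun (hs t htC) i
  · intro hs t htC
    funext i
    simpa [Finset.sum_apply] using hs i (fun j => t j i) ⟨t, htC, fun _ => rfl⟩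

theorem zero_mem_compCode (C : Submodule (RR F) (Fin n → RR F)) (i : Fin 4) :
    0 ∈ compCode (C : Set (Fin n → RR F)) i :=
  ⟨0, C.zero_mem, fun _ => rfl⟩

theorem single_mem_of_mem_compCode (C : Submodule (RR F) (Fin n → RR F)) {i : Fin 4}
    {x : Fin n → F} (hx : x ∈ compCode (C : Set (Fin n → RR F)) i) :
    (fun j => Pi.single i (x j)) ∈ C := by
  obtain ⟨c, hcC, hcx⟩ := hx
  convert C.smul_mem (gam F i) hcC using 1
  funext j k
  by_cases hk : k = i
  · subst hk
    simp [gam, hcx j]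
  · simp [gam, hk]

theorem single_mem_galDualR {pl : ℕ} (hpl : pl ≠ 0) {C : Set (Fin n → RR F)} {i : Fin 4}
    {x : Fin n → F} (hx : x ∈ galDualF pl (compCode C i)) :
    (fun j => Pi.single i (x j)) ∈ galDualR pl C := by
  refine mem_galDualR_iff.2 fun k => ?_
  by_cases hk : k = i
  · subst hk
    simpa using hx
  · simp only [Pi.single_eq_of_ne hk]
    exact zero_mem_galDualF hpl (compCode C k)

end

theorem statement5_general {p l n : ℕ} (hp : p.Prime)
    (F : Type*) [Field F]
    (C : Submodule (RR F) (Fin n → RR F)) :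
    (C : Set (Fin n → RR F)) ∩ galDualR (p ^ l) (C : Set (Fin n → RR F)) = {0} ↔
      ∀ i, compCode (C : Set (Fin n → RR F)) i ∩
        galDualF (p ^ l) (compCode (C : Set (Fin n → RR F)) i) = {0} := by
  have hpl : p ^ l ≠ 0 := pow_ne_zero _ hp.ne_zero
  simp only [Set.eq_singleton_iff_unique_mem, Set.mem_inter_iff]
  constructor
  · rintro ⟨-, hC⟩ i
    refine ⟨⟨zero_mem_compCode C i, zero_mem_galDualF hpl _⟩, ?_⟩
    rintro x ⟨hxC, hxD⟩
    have hlift := hC _ ⟨single_mem_of_mem_compCode C hxC, single_mem_galDualR hpl hxD⟩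
    funext j
    simpa using congrFun (congrFun hlift j) i
  · intro hC
    refine ⟨⟨C.zero_mem, mem_galDualR_iff.2 fun i => zero_mem_galDualF hpl _⟩, ?_⟩
    rintro c ⟨hcC, hcD⟩
    funext j i
    exact congrFun ((hC i).2 _ ⟨⟨c, hcC, fun _ => rfl⟩, mem_galDualR_iff.1 hcD i⟩) j

/-- `C` is `l`-Galois LCD over `R` iff each component code `C_i`
is `l`-Galois LCD over `F_q`. -/
theorem statement5 {p e l n : ℕ} (hp : p.Prime) (he : 0 < e) (hl : l < e)
    (F : Type*) [Field F] [Fintype F] (hcard : Fintype.card F = p ^ e)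
    (C : Submodule (RR F) (Fin n → RR F)) :
    (C : Set (Fin n → RR F)) ∩ galDualR (p ^ l) (C : Set (Fin n → RR F)) = {0} ↔
      ∀ i, compCode (C : Set (Fin n → RR F)) i ∩
        galDualF (p ^ l) (compCode (C : Set (Fin n → RR F)) i) = {0} :=
  statement5_general hp F C
end

section
/- Let 0 < l < e, suppose p^{e−l} + 1 divides p^e − 1, set β = (p^e − 1)/(p^{e−l} + 1) and (F_q^*)^β = {x^β : x ∈ F_q^*}. Let C = γ_1C_1 ⊕ γ_2C_2 ⊕ γ_3C_3 ⊕ γ_4C_4 be a linear code of length n over R whose component codes C_i have generator matrices G_i = [I_{k_i} : M_i] in standard form (k_i × n matrices of rank k_i whose rows form a basis of C_i). Set P_i = G_i(F^{e−l}(G_i))^T, where F^{e−l}(G_i) is the entrywise p^{e−l}-th power of G_i. Suppose for each i = 1,2,3,4 there is an integer t_i with 0 ≤ t_i ≤ k_i − 1 such that det((P_i)_{S_i}) = 0 for every S_i ⊆ {1,…,k_i} with 0 ≤ |S_i| ≤ t_i, and there exists R_i ⊆ {1,…,k_i} with |R_i| = t_i + 1 and det((P_i)_{R_i}) ≠ 0.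 Let α = (α_1,…,α_n) ∈ R^n, with α_j = Σ_{i=1}^4 γ_i α_{ji}, satisfy α_{ji} ∈ F_q \ (F_q^*)^β for j ∈ R_i and α_{ji} ∈ (F_q^*)^β for j ∈ {1,…,n} \ R_i, for each i = 1,2,3,4. Then C^α is an l-Galois LCD code over R. -/
open scoped BigOperators

/-!
Everything splits along the idempotents `γ_i`, so it suffices that each scaled component code is
`l`-Galois LCD over `F_q`, i.e. that the Galois Gram matrix `H F^l(H)ᵀ` of its generator matrix
`H = G_i diag(a)` is nonsingular. Applying `F^{e-l}` turns this matrix into the transpose of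
`G_i diag(a^{p^{e-l}+1}) F^{e-l}(G_i)ᵀ`. Since `(F_q^*)^β` is exactly the set of `x` with
`x^{p^{e-l}+1} = 1`, the standard form makes the latter `P_i` plus a diagonal matrix whose support
is exactly `R_i`. Expanding the determinant along that diagonal, the vanishing minors kill every
term except the one indexed by `R_i`, which is nonzero.
-/

open Matrix

section Determinant

variable {ι R : Type*} [Fintype ι] [DecidableEq ι] [CommRing R]

theorem det_of_ite_single_one (P : Matrix ι ι R) (S : Finset ι) :
    det (of fun r => if r ∈ S then Pi.single r 1 else P r) =
      (P.submatrix ((↑) : {i // i ∉ S} → ι) (↑)).det := by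
  set Q : Matrix ι ι R := of fun r => if r ∈ S then Pi.single r 1 else P r
  have hblock : Q.submatrix (Equiv.sumCompl (· ∈ S)) (Equiv.sumCompl (· ∈ S))
      = fromBlocks 1 0 (of fun a b => Q a.val b.val) (P.submatrix (↑) (↑)) := by
    ext (i | i) (j | j) <;>
      simp only [submatrix_apply, Equiv.sumCompl_apply_inl, Equiv.sumCompl_apply_inr,
        fromBlocks_apply₁₁, fromBlocks_apply₁₂, fromBlocks_apply₂₁, fromBlocks_apply₂₂, of_apply,
        one_apply, Matrix.zero_apply, Q, i.2, if_true, if_false, Pi.single_apply,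
        Subtype.ext_iff]
    · exact if_congr eq_comm rfl rfl
    · exact if_neg fun h : (j : ι) = i => j.2 (h ▸ i.2)
  rw [← det_submatrix_equiv_self (Equiv.sumCompl (· ∈ S)) Q, hblock, det_fromBlocks_zero₁₂,
    det_one, one_mul]

theorem det_add_diagonal_eq_sum (P : Matrix ι ι R) (d : ι → R) :
    (P + diagonal d).det =
      ∑ S : Finset ι, (∏ i ∈ S, d i) * (P.submatrix ((↑) : {i // i ∉ S} → ι) (↑)).det := by
  let m : ι → ι → R := fun r => d r • Pi.single r 1
  let p : ι → ι → R := fun r => P r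
  have hrows : P + diagonal d = of (Finset.univ.piecewise (m + p) p) := by
    ext r s
    by_cases h : r = s <;> simp [m, p, h, add_comm]
  have hterm (S : Finset ι) : detRowAlternating (S.piecewise m p) =
      (∏ i ∈ S, d i) * (P.submatrix ((↑) : {i // i ∉ S} → ι) (↑)).det := by
    let q : ι → ι → R := S.piecewise (fun r => Pi.single r 1) p
    have hsmul : S.piecewise m p = S.piecewise (fun r => d r • q r) q := by
      ext r : 1
      by_cases hr : r ∈ S <;> simp [hr, m, q]
    rw [hsmul]
    refine (detRowAlternating.toMultilinearMap.map_piecewise_smul d q S).trans ?_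
    rw [smul_eq_mul, ← det_of_ite_single_one]
    rfl
  rw [hrows, ← Finset.powerset_univ, ← Finset.sum_congr rfl fun S _ => hterm S]
  exact detRowAlternating.toMultilinearMap.map_piecewise_add m p Finset.univ

theorem det_add_diagonal_of_minors_eq_zero (P : Matrix ι ι R) (d : ι → R) (T : Finset ι)
    (hd : ∀ i ∉ T, d i = 0)
    (hminor : ∀ S ⊂ T, (P.submatrix ((↑) : {i // i ∉ S} → ι) (↑)).det = 0) :
    (P + diagonal d).det =
      (∏ i ∈ T, d i) * (P.submatrix ((↑) : {i // i ∉ T} → ι) (↑)).det := by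
  rw [det_add_diagonal_eq_sum, Fintype.sum_eq_single T]
  intro S hST
  by_cases hS : S ⊆ T
  · rw [hminor S (Finset.ssubset_iff_subset_ne.mpr ⟨hS, hST⟩), mul_zero]
  · obtain ⟨i, hiS, hiT⟩ := Finset.not_subset.mp hS
    rw [Finset.prod_eq_zero hiS (hd i hiT), zero_mul]

end Determinant

theorem mul_diagonal_mul_transpose_eq_diagonal {κ ι R : Type*} [Fintype κ] [Fintype ι]
    [DecidableEq κ] [DecidableEq ι] [CommRing R] {c : κ → ι} (hc : Function.Injective c)
    {G B : Matrix κ ι R} (hG : ∀ r s, G r (c s) = if r = s then 1 else 0)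
    (hB : ∀ r s, B r (c s) = if r = s then 1 else 0) {d : ι → R}
    (hd : ∀ j ∉ Set.range c, d j = 0) :
    G * diagonal d * Bᵀ = diagonal (d ∘ c) := by
  ext r s
  rw [mul_apply]
  simp only [mul_diagonal, transpose_apply]
  rw [← Fintype.sum_of_injective c hc (fun u => G r (c u) * d (c u) * B s (c u)) _
    (fun j hj => by rw [hd j hj, mul_zero, zero_mul]) (fun _ => rfl)]
  by_cases h : r = s <;> simp [hG, hB, h]

theorem IsCyclic.exists_pow_eq_of_pow_eq_one {G : Type*} [Group G] [IsCyclic G] [Finite G]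
    {β m : ℕ} (hcard : Nat.card G = β * m) {a : G} (ha : a ^ m = 1) : ∃ x : G, x ^ β = a := by
  obtain ⟨g, hg⟩ := IsCyclic.exists_generator (α := G)
  obtain ⟨k, rfl⟩ := mem_powers_iff_mem_zpowers.mpr (hg a)
  have hm : 0 < m := Nat.pos_of_mul_pos_left (hcard ▸ Nat.card_pos)
  have hdvd : β * m ∣ k * m := by
    rw [← hcard, ← orderOf_eq_card_of_forall_mem_zpowers hg]
    exact orderOf_dvd_of_pow_eq_one (by rwa [pow_mul])
  obtain ⟨d, rfl⟩ := Nat.dvd_of_mul_dvd_mul_right hm hdvd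
  exact ⟨g ^ d, by rw [← pow_mul, mul_comm]⟩

theorem FiniteField.exists_ne_zero_pow_eq_iff {F : Type*} [Field F] [Fintype F] {β m : ℕ}
    (hcard : Fintype.card F - 1 = β * m) (a : F) :
    (∃ x : F, x ≠ 0 ∧ x ^ β = a) ↔ a ^ m = 1 := by
  constructor
  · rintro ⟨x, hx, rfl⟩
    rw [← pow_mul, ← hcard, FiniteField.pow_card_sub_one_eq_one x hx]
  · intro ha
    have hm : m ≠ 0 := by
      rintro rfl
      have := Fintype.one_lt_card (α := F)
      omega
    have ha0 : a ≠ 0 := by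
      rintro rfl
      simp [zero_pow hm] at ha
    obtain ⟨x, hx⟩ := IsCyclic.exists_pow_eq_of_pow_eq_one (G := Fˣ) (a := Units.mk0 a ha0)
      (by rw [Nat.card_units, Nat.card_eq_fintype_card, hcard]) (Units.ext (by simpa))
    exact ⟨x, x.ne_zero, by simpa using congrArg Units.val hx⟩

theorem iterateFrobenius_det_mul_map_pow_transpose {κ ι F : Type*} [Fintype κ] [DecidableEq κ]
    [Fintype ι] [Field F] [Fintype F] {p l m : ℕ} [ExpChar F p]
    (hcard : Fintype.card F = p ^ (l + m)) (H : Matrix κ ι F) :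
    iterateFrobenius F p m (H * (H.map (· ^ p ^ l))ᵀ).det = (H * (H.map (· ^ p ^ m))ᵀ).det := by
  have hfix (x : F) : (x ^ p ^ l) ^ p ^ m = x := by
    rw [← pow_mul, ← pow_add, ← hcard, FiniteField.pow_card]
  rw [RingHom.map_det, RingHom.mapMatrix_apply, Matrix.map_mul, transpose_map, Matrix.map_map]
  simp only [Function.comp_def, iterateFrobenius_def, hfix, map_id']
  rw [← det_transpose, transpose_mul, transpose_transpose]
  rfl

theorem span_inter_galDualF_eq_zero_of_det_ne_zero {κ ι F : Type*} [Fintype κ] [DecidableEq κ]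
    [Fintype ι] [Field F] {p l : ℕ} [ExpChar F p] (H : Matrix κ ι F)
    (hH : (H * (H.map (· ^ p ^ l))ᵀ).det ≠ 0) :
    (Submodule.span F (Set.range fun r => H r) : Set (ι → F)) ∩
      galDualF (p ^ l) (Submodule.span F (Set.range fun r => H r) : Set (ι → F)) = {0} := by
  set φ := iterateFrobenius F p l
  have hφ : (fun x : F => x ^ p ^ l) = φ := funext fun x => (iterateFrobenius_def p l x).symm
  refine Set.eq_singleton_iff_unique_mem.mpr
    ⟨⟨Submodule.zero_mem _, fun c _ => by simp [zero_pow (expChar_pow_pos F p l).ne']⟩, ?_⟩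
  rintro y ⟨hy, hdual⟩
  obtain ⟨x, rfl⟩ : y ∈ LinearMap.range H.vecMulLinear := by
    rw [range_vecMulLinear]
    exact hy
  have hGram : (H * (H.map φ)ᵀ) *ᵥ (φ ∘ x) = 0 := by
    ext r
    rw [← mulVec_mulVec, mulVec_transpose]
    simp only [mulVec, dotProduct, Pi.zero_apply, ← RingHom.map_vecMul]
    exact hdual _ (Submodule.subset_span ⟨r, rfl⟩)
  rw [← hφ] at hGram
  have hx : φ ∘ x = 0 := eq_zero_of_mulVec_eq_zero hH hGram
  have : x = 0 := funext fun s => φ.injective (by simpa using congrFun hx s)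
  simp [this]

theorem scaleCodeF_span_range {F : Type*} [Field F] {k n : ℕ} (a : Fin n → F)
    (G : Matrix (Fin k) (Fin n) F) :
    scaleCodeF a (Submodule.span F (Set.range fun r => G r)) =
      (Submodule.span F (Set.range fun r => (G * diagonal a) r) : Set (Fin n → F)) := by
  have hscale : (fun c : Fin n → F => fun j => a j * c j) = (diagonal a).mulVecLin := by
    ext c j
    simp [mulVec_diagonal]
  rw [scaleCodeF, hscale, ← Submodule.map_coe, Submodule.map_span, ← Set.range_comp]
  congr 3
  ext r j
  simp [mulVec_diagonal, mul_comm]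

theorem det_mul_diagonal_mul_map_transpose_ne_zero {κ ι F : Type*} [Fintype κ] [DecidableEq κ]
    [Fintype ι] [DecidableEq ι] [Field F] [Fintype F] {p l m : ℕ} [ExpChar F p]
    (hcard : Fintype.card F = p ^ (l + m)) {c : κ → ι} (hc : Function.Injective c)
    {G : Matrix κ ι F} (hG : ∀ r s, G r (c s) = if r = s then 1 else 0) (T : Finset κ)
    (hminor : ∀ S ⊂ T,
      ((G * (G.map (· ^ p ^ m))ᵀ).submatrix ((↑) : {i // i ∉ S} → κ) (↑)).det = 0)
    (hT : ((G * (G.map (· ^ p ^ m))ᵀ).submatrix ((↑) : {i // i ∉ T} → κ) (↑)).det ≠ 0)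
    {a : ι → F} (haT : ∀ s ∈ T, a (c s) ^ (p ^ m + 1) ≠ 1)
    (ha : ∀ j, (∀ s ∈ T, c s ≠ j) → a j ^ (p ^ m + 1) = 1) :
    (G * diagonal a * ((G * diagonal a).map (· ^ p ^ l))ᵀ).det ≠ 0 := by
  set q := p ^ m
  have hq : q ≠ 0 := (expChar_pow_pos F p m).ne'
  set φ := iterateFrobenius F p m
  have hφ : (fun x : F => x ^ q) = φ := funext fun x => (iterateFrobenius_def p m x).symm
  set d : ι → F := fun j => a j ^ (q + 1) - 1
  have hscaled : G * diagonal a * ((G * diagonal a).map (· ^ q))ᵀ =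
      G * (G.map (· ^ q))ᵀ + G * diagonal d * (G.map (· ^ q))ᵀ := by
    have hw : (fun j => a j * φ (a j)) = fun j => 1 + d j := by
      ext j
      simp [d, ← hφ, pow_succ']
    rw [hφ, Matrix.map_mul, diagonal_map (map_zero φ), transpose_mul, diagonal_transpose,
      ← Matrix.mul_assoc, Matrix.mul_assoc G, diagonal_mul_diagonal', hw, ← diagonal_add,
      diagonal_one, Matrix.mul_add, Matrix.mul_one, Matrix.add_mul, Matrix.mul_assoc G]
  have hGq : ∀ r s, G.map (· ^ q) r (c s) = if r = s then 1 else 0 := by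
    intro r s
    simp [hG, apply_ite (· ^ q), zero_pow hq]
  have hdiag : G * diagonal d * (G.map (· ^ q))ᵀ = diagonal (d ∘ c) :=
    mul_diagonal_mul_transpose_eq_diagonal hc hG hGq fun j hj =>
      sub_eq_zero.mpr (ha j fun s _ hs => hj ⟨s, hs⟩)
  have hdet := det_add_diagonal_of_minors_eq_zero _ (d ∘ c) T
    (fun s hs => sub_eq_zero.mpr (ha _ fun s' hs' h => hs (hc h ▸ hs'))) hminor
  intro h0
  have := iterateFrobenius_det_mul_map_pow_transpose hcard (G * diagonal a)
  rw [h0, map_zero, hscaled, hdiag, hdet] at this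
  exact mul_ne_zero (Finset.prod_ne_zero_iff.mpr fun s hs => sub_ne_zero.mpr (haT s hs)) hT
    this.symm

theorem scaleCodeF_inter_galDualF_eq_zero {p e l k n : ℕ} (hle : l ≤ e) {F : Type*} [Field F]
    [Fintype F] [ExpChar F p] (hcard : Fintype.card F = p ^ e) {β : ℕ}
    (hβ : β * (p ^ (e - l) + 1) = p ^ e - 1) (hkn : k ≤ n) {G : Matrix (Fin k) (Fin n) F}
    (hstd : ∀ r s : Fin k, G r (Fin.castLE hkn s) = if r = s then 1 else 0) (T : Finset (Fin k))
    (hminor : ∀ S ⊂ T, (minorOff (G * (G.map (· ^ p ^ (e - l)))ᵀ) S).det = 0)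
    (hT : (minorOff (G * (G.map (· ^ p ^ (e - l)))ᵀ) T).det ≠ 0) {a : Fin n → F}
    (haT : ∀ s ∈ T, ¬ ∃ x : F, x ≠ 0 ∧ x ^ β = a (Fin.castLE hkn s))
    (ha : ∀ j, (∀ s ∈ T, Fin.castLE hkn s ≠ j) → ∃ x : F, x ≠ 0 ∧ x ^ β = a j) :
    scaleCodeF a (Submodule.span F (Set.range fun r => G r)) ∩
      galDualF (p ^ l) (scaleCodeF a (Submodule.span F (Set.range fun r => G r))) = {0} := by
  have hpow := FiniteField.exists_ne_zero_pow_eq_iff (hcard ▸ hβ.symm)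
  rw [scaleCodeF_span_range]
  refine span_inter_galDualF_eq_zero_of_det_ne_zero _ ?_
  exact det_mul_diagonal_mul_map_transpose_ne_zero (by rwa [Nat.add_sub_cancel' hle])
    (Fin.castLE_injective hkn) hstd T hminor hT (fun s hs => mt (hpow _).mpr (haT s hs))
    (fun j hj => (hpow _).mp (ha j hj))

theorem mem_scaleCodeF_inter_galDualF_of_mem {F : Type*} [Field F] {n pl : ℕ}
    {α : Fin n → RR F} {C : Submodule (RR F) (Fin n → RR F)} {c : Fin n → RR F}
    (hc : c ∈ scaleCode α C ∩ galDualR pl (scaleCode α C)) (i : Fin 4) :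
    (fun j => c j i) ∈ scaleCodeF (fun j => α j i) (compCode C i) ∩
      galDualF pl (scaleCodeF (fun j => α j i) (compCode C i)) := by
  obtain ⟨⟨c', hc'C, rfl⟩, hdual⟩ := hc
  refine ⟨⟨fun j => c' j i, ⟨c', hc'C, fun _ => rfl⟩, rfl⟩, ?_⟩
  rintro _ ⟨y, ⟨w, hwC, hw⟩, rfl⟩
  have := congrFun (hdual _ ⟨gam F i • w, C.smul_mem _ hwC, rfl⟩) i
  simpa [gam, ← hw] using this

open Matrix in
theorem statement15_general {p e l n : ℕ} (hp : p.Prime) (hle : l < e)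
    (F : Type*) [Field F] [Fintype F] (hcard : Fintype.card F = p ^ e)
    (hdvd : p ^ (e - l) + 1 ∣ p ^ e - 1)
    (β : ℕ) (hβ : β = (p ^ e - 1) / (p ^ (e - l) + 1))
    (k : Fin 4 → ℕ) (hkn : ∀ i, k i ≤ n)
    (G : ∀ i, Matrix (Fin (k i)) (Fin n) F)
    (C : Submodule (RR F) (Fin n → RR F))
    (hC : ∀ i, compCode (C : Set (Fin n → RR F)) i =
      (Submodule.span F (Set.range (fun r : Fin (k i) => G i r)) : Set (Fin n → F)))
    -- standard form `G_i = [I_{k_i} : M_i]`: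
    (hstd : ∀ i, ∀ r s : Fin (k i), G i r (Fin.castLE (hkn i) s) = if r = s then 1 else 0)
    (t : Fin 4 → ℕ)
    (hvanish : ∀ i, ∀ S : Finset (Fin (k i)), S.card ≤ t i →
      (minorOff (G i * ((G i).map (fun x => x ^ p ^ (e - l)))ᵀ) S).det = 0)
    (R : ∀ i, Finset (Fin (k i))) (hRcard : ∀ i, (R i).card = t i + 1)
    (hRdet : ∀ i, (minorOff (G i * ((G i).map (fun x => x ^ p ^ (e - l)))ᵀ) (R i)).det ≠ 0)
    (α : Fin n → RR F)
    -- `α_{ji} ∈ F_q \ (F_q^*)^β` for `j ∈ R_i`: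
    (hα1 : ∀ i, ∀ s ∈ R i, ¬ ∃ x : F, x ≠ 0 ∧ x ^ β = α (Fin.castLE (hkn i) s) i)
    -- `α_{ji} ∈ (F_q^*)^β` for `j ∉ R_i`:
    (hα2 : ∀ (i : Fin 4) (j : Fin n), (∀ s ∈ R i, Fin.castLE (hkn i) s ≠ j) →
      ∃ x : F, x ≠ 0 ∧ x ^ β = α j i) :
    scaleCode α (C : Set (Fin n → RR F)) ∩
      galDualR (p ^ l) (scaleCode α (C : Set (Fin n → RR F))) = {0} := by
  have := Fact.mk hp
  have := charP_of_card_eq_prime_pow hcard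
  have hβmul : β * (p ^ (e - l) + 1) = p ^ e - 1 := hβ ▸ Nat.div_mul_cancel hdvd
  refine Set.eq_singleton_iff_unique_mem.mpr ⟨⟨⟨0, C.zero_mem, by ext; simp⟩,
    fun _ _ => by simp [zero_pow (pow_ne_zero l hp.ne_zero)]⟩, ?_⟩
  intro c hc
  ext j i
  have hminor (S) (hS : S ⊂ R i) := hvanish i S <|
    Nat.lt_succ_iff.mp ((Finset.card_lt_card hS).trans_eq (hRcard i))
  have hLCD := scaleCodeF_inter_galDualF_eq_zero hle.le hcard hβmul (hkn i) (hstd i) (R i)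
    hminor (hRdet i) (hα1 i) (hα2 i)
  have hci := mem_scaleCodeF_inter_galDualF_of_mem hc i
  rw [hC i, hLCD] at hci
  exact congrFun hci j

open Matrix in
/-- construction of `l`-Galois LCD codes `C^α` over `R` from a linear
code `C = γ_1C_1 ⊕ γ_2C_2 ⊕ γ_3C_3 ⊕ γ_4C_4` with generator matrices
`G_i = [I_{k_i} : M_i]`, `P_i = G_i(F^{e−l}(G_i))ᵀ`, where
`β = (p^e − 1)/(p^{e−l} + 1)` and `(F_q^*)^β = {x^β : x ≠ 0}`. -/
theorem statement15 {p e l n : ℕ} (hp : p.Prime) (hl0 : 0 < l) (hle : l < e)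
    (F : Type*) [Field F] [Fintype F] (hcard : Fintype.card F = p ^ e)
    (hdvd : p ^ (e - l) + 1 ∣ p ^ e - 1)
    (β : ℕ) (hβ : β = (p ^ e - 1) / (p ^ (e - l) + 1))
    (k : Fin 4 → ℕ) (hkn : ∀ i, k i ≤ n)
    (G : ∀ i, Matrix (Fin (k i)) (Fin n) F)
    -- the rows of `G i` form a basis of `C_i` (`G i` has rank `k i`):
    (hGli : ∀ i, LinearIndependent F (fun r : Fin (k i) => G i r))
    (C : Submodule (RR F) (Fin n → RR F))
    (hC : ∀ i, compCode (C : Set (Fin n → RR F)) i =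
      (Submodule.span F (Set.range (fun r : Fin (k i) => G i r)) : Set (Fin n → F)))
    -- standard form `G_i = [I_{k_i} : M_i]`:
    (hstd : ∀ i, ∀ r s : Fin (k i), G i r (Fin.castLE (hkn i) s) = if r = s then 1 else 0)
    (t : Fin 4 → ℕ) (ht : ∀ i, t i + 1 ≤ k i)
    (hvanish : ∀ i, ∀ S : Finset (Fin (k i)), S.card ≤ t i →
      (minorOff (G i * ((G i).map (fun x => x ^ p ^ (e - l)))ᵀ) S).det = 0)
    (R : ∀ i, Finset (Fin (k i))) (hRcard : ∀ i, (R i).card = t i + 1)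
    (hRdet : ∀ i, (minorOff (G i * ((G i).map (fun x => x ^ p ^ (e - l)))ᵀ) (R i)).det ≠ 0)
    (α : Fin n → RR F)
    -- `α_{ji} ∈ F_q \ (F_q^*)^β` for `j ∈ R_i`:
    (hα1 : ∀ i, ∀ s ∈ R i, ¬ ∃ x : F, x ≠ 0 ∧ x ^ β = α (Fin.castLE (hkn i) s) i)
    -- `α_{ji} ∈ (F_q^*)^β` for `j ∉ R_i`:
    (hα2 : ∀ (i : Fin 4) (j : Fin n), (∀ s ∈ R i, Fin.castLE (hkn i) s ≠ j) →
      ∃ x : F, x ≠ 0 ∧ x ^ β = α j i) :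
    scaleCode α (C : Set (Fin n → RR F)) ∩
      galDualR (p ^ l) (scaleCode α (C : Set (Fin n → RR F))) = {0} :=
  statement15_general hp hle F hcard hdvd β hβ k hkn G C hC hstd t hvanish R hRcard hRdet α hα1 hα2
end

section
/- Let C = γ_1C_1 ⊕ γ_2C_2 ⊕ γ_3C_3 ⊕ γ_4C_4 be a linear code of length n over R with component codes C_1, C_2, C_3, C_4, each nonzero. Then C is an MDS code over R if and only if each C_i is an MDS code over F_q and d_H(C_1) = d_H(C_2) = d_H(C_3) = d_H(C_4), i.e. the component codes are MDS codes with the same parameters. -/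
open scoped BigOperators

/-! The minimum Lee distance of `C` is the least of the `d_H(C_i)`, and `K = ∑ k_i` because
`C ≅ C_1 × C_2 × C_3 × C_4`. Adding the four Singleton bounds `d_H(C_i) + k_i ≤ n + 1` gives
`4 d_L(C) + K ≤ ∑ (d_H(C_i) + k_i) ≤ 4n + 4`, and equality holds exactly when every bound is
tight and every `d_H(C_i)` equals `d_L(C)`. -/

section Hamming

variable {F : Type*} [Field F] [DecidableEq F] {ι : Type*} [Fintype ι]
  {D : Set (ι → F)}

lemma dHam_le_hammingNorm {x : ι → F} (hx : x ∈ D) (hx0 : x ≠ 0) : dHam D ≤ hammingNorm x :=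
  Nat.sInf_le ⟨x, ⟨hx, hx0⟩, rfl⟩

lemma exists_hammingNorm_eq_dHam (hD : ∃ x ∈ D, x ≠ 0) :
    ∃ x ∈ D, x ≠ 0 ∧ hammingNorm x = dHam D := by
  obtain ⟨x, hx, hx0⟩ := hD
  obtain ⟨y, ⟨hy, hy0⟩, hyd⟩ :=
    Nat.sInf_mem (s := hammingNorm '' {x ∈ D | x ≠ 0}) ⟨_, ⟨x, ⟨hx, hx0⟩, rfl⟩⟩
  exact ⟨y, hy, hy0, hyd⟩

lemma hammingNorm_le_card_of_eq_zero_of_notMem {x : ι → F} {S : Finset ι}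
    (hx : ∀ j ∉ S, x j = 0) :
    hammingNorm x ≤ S.card :=
  Finset.card_le_card fun j hj => by
    by_contra hjS
    exact (Finset.mem_filter.mp hj).2 (hx j hjS)

lemma eq_of_eqOn_compl_of_card_lt_dHam (hsub : ∀ x ∈ D, ∀ y ∈ D, x - y ∈ D) {S : Finset ι}
    (hS : S.card < dHam D) {x y : ι → F} (hx : x ∈ D) (hy : y ∈ D)
    (hxy : ∀ j ∉ S, x j = y j) : x = y := by
  by_contra hne
  have hd := dHam_le_hammingNorm (hsub x hx y hy) (sub_ne_zero.mpr hne)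
  have hS' := hammingNorm_le_card_of_eq_zero_of_notMem (x := x - y) (S := S)
    fun j hj => sub_eq_zero.mpr (hxy j hj)
  omega

lemma dHam_add_le_of_card_eq_pow [Fintype F] (hsub : ∀ x ∈ D, ∀ y ∈ D, x - y ∈ D)
    (hD : ∃ x ∈ D, x ≠ 0) {k : ℕ} (hk : Nat.card D = Fintype.card F ^ k) :
    dHam D + k ≤ Fintype.card ι + 1 := by
  classical
  obtain ⟨x₀, -, hx₀, hx₀d⟩ := exists_hammingNorm_eq_dHam hD
  have hd_pos : 0 < dHam D := hx₀d ▸ hammingNorm_pos_iff.mpr hx₀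
  have hd_le : dHam D ≤ Fintype.card ι := hx₀d ▸ hammingNorm_le_card_fintype
  obtain ⟨S, -, hS⟩ := Finset.exists_subset_card_eq
    (s := (Finset.univ : Finset ι)) (n := dHam D - 1) (by simp only [Finset.card_univ]; omega)
  have hinj : Function.Injective fun (x : D) (j : {j // j ∉ S}) => (x : ι → F) j :=
    fun x y hxy => Subtype.ext <| eq_of_eqOn_compl_of_card_lt_dHam hsub (by omega) x.2 y.2
      fun j hj => congrFun hxy ⟨j, hj⟩
  have hcard : Fintype.card F ^ k ≤ Fintype.card F ^ (Fintype.card ι - (dHam D - 1)) :=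
    calc Fintype.card F ^ k = Nat.card D := hk.symm
      _ ≤ Nat.card ({j // j ∉ S} → F) := Nat.card_le_card_of_injective _ hinj
      _ = _ := by simp [Nat.card_eq_fintype_card, Fintype.card_subtype_compl, hS]
  have := (Nat.pow_le_pow_iff_right Fintype.one_lt_card).mp hcard
  omega

end Hamming

lemma card_mul_add_sum_eq_iff {ι : Type*} [Fintype ι] {d N : ℕ} {ds ks : ι → ℕ}
    (hd : ∀ i, d ≤ ds i) (hbound : ∀ i, ds i + ks i ≤ N) (hmin : ∃ i, ds i ≤ d) :
    Fintype.card ι * d + ∑ i, ks i = Fintype.card ι * N ↔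
      (∀ i, ds i + ks i = N) ∧ ∀ i i', ds i = ds i' := by
  have hsum : Fintype.card ι * d + ∑ i, ks i = ∑ i, (d + ks i) := by
    simp [Finset.sum_add_distrib]
  rw [hsum, ← smul_eq_mul, ← Finset.card_univ, ← Finset.sum_const,
    Finset.sum_eq_sum_iff_of_le fun i _ => (Nat.add_le_add_right (hd i) _).trans (hbound i)]
  obtain ⟨i₀, hi₀⟩ := hmin
  constructor
  · intro h
    have hds : ∀ i, ds i = d := fun i => by
      have h₁ := h i (Finset.mem_univ _); have h₂ := hd i; have h₃ := hbound i; omega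
    exact ⟨fun i => by have h₁ := h i (Finset.mem_univ _); have h₂ := hds i; omega,
      fun i i' => by rw [hds, hds]⟩
  · rintro ⟨htight, hequal⟩ i -
    have h₁ := htight i; have h₂ := hequal i i₀; have h₃ := hd i; omega

section Code

variable {F : Type*} [Field F] {n : ℕ}

lemma mem_compCode_of_mem {C : Set (Fin n → RR F)} {c : Fin n → RR F} (hc : c ∈ C)
    (i : Fin 4) :
    (fun j => c j i) ∈ compCode C i :=
  ⟨c, hc, fun _ => rfl⟩

variable {C : Submodule (RR F) (Fin n → RR F)}

lemma sub_mem_compCode {i : Fin 4} {x y : Fin n → F}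
    (hx : x ∈ compCode (C : Set (Fin n → RR F)) i)
    (hy : y ∈ compCode (C : Set (Fin n → RR F)) i) :
    x - y ∈ compCode (C : Set (Fin n → RR F)) i := by
  obtain ⟨c, hc, hcx⟩ := hx
  obtain ⟨c', hc', hcy⟩ := hy
  exact ⟨c - c', sub_mem hc hc', fun j => by simp [hcx j, hcy j]⟩

variable (C) in
lemma card_eq_prod_card_compCode :
    Nat.card C = ∏ i, Nat.card (compCode (C : Set (Fin n → RR F)) i) := by
  rw [← Nat.card_pi]
  refine Nat.card_congr (Equiv.ofBijective
    (fun c i => ⟨fun j => (c : Fin n → RR F) j i, mem_compCode_of_mem c.2 i⟩) ⟨?_, ?_⟩)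
  · intro c c' h
    exact Subtype.ext <| funext fun j => funext fun i =>
      congrFun (congrArg Subtype.val (congrFun h i)) j
  · intro x
    choose c hc hcx using fun i => (x i).2
    refine ⟨⟨∑ i, gam F i • c i, C.sum_mem fun i _ => C.smul_mem _ (hc i)⟩, ?_⟩
    funext i
    ext j
    simp [gam, Pi.single_apply, ← hcx]

variable [DecidableEq F]

lemma leeWt_eq_sum_hammingNorm (c : Fin n → RR F) :
    leeWt c = ∑ i, hammingNorm fun j => c j i := by
  simp only [leeWt, hammingNorm, Finset.card_filter]
  exact Finset.sum_comm

lemma leeWt_gam_smul (i : Fin 4) (c : Fin n → RR F) :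
    leeWt (gam F i • c) = hammingNorm fun j => c j i := by
  rw [leeWt_eq_sum_hammingNorm, Finset.sum_eq_single i]
  · simp [gam]
  · intro i' _ hi'
    simp [gam, hi', Pi.zero_def]
  · simp

lemma dLee_le_leeWt {c : Fin n → RR F} (hc : c ∈ C) (hc0 : c ≠ 0) :
    dLee (C : Set (Fin n → RR F)) ≤ leeWt c :=
  Nat.sInf_le ⟨c, ⟨hc, hc0⟩, rfl⟩

lemma exists_leeWt_eq_dLee (hC : ∃ c ∈ C, c ≠ 0) :
    ∃ c ∈ C, c ≠ 0 ∧ leeWt c = dLee (C : Set (Fin n → RR F)) := by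
  obtain ⟨c, hc, hc0⟩ := hC
  obtain ⟨c', ⟨hc', hc'0⟩, hc'd⟩ := Nat.sInf_mem
    (s := leeWt '' {c ∈ (C : Set (Fin n → RR F)) | c ≠ 0}) ⟨_, ⟨c, ⟨hc, hc0⟩, rfl⟩⟩
  exact ⟨c', hc', hc'0, hc'd⟩

lemma dLee_le_dHam_compCode {i : Fin 4}
    (hi : ∃ x ∈ compCode (C : Set (Fin n → RR F)) i, x ≠ 0) :
    dLee (C : Set (Fin n → RR F)) ≤ dHam (compCode (C : Set (Fin n → RR F)) i) := by
  obtain ⟨x, ⟨c, hc, hcx⟩, hx0, hxd⟩ := exists_hammingNorm_eq_dHam hi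
  have hx : (fun j => c j i) = x := funext hcx
  have hγc : gam F i • c ≠ 0 := fun h => hx0 <| funext fun j => by
    simpa [gam, hcx] using congrFun (congrFun h j) i
  calc dLee (C : Set (Fin n → RR F))
      ≤ leeWt (gam F i • c) := dLee_le_leeWt (C.smul_mem _ hc) hγc
    _ = dHam (compCode (C : Set (Fin n → RR F)) i) := by rw [leeWt_gam_smul, hx, hxd]

lemma exists_dHam_compCode_le_dLee (hC : ∃ c ∈ C, c ≠ 0) :
    ∃ i, dHam (compCode (C : Set (Fin n → RR F)) i) ≤ dLee (C : Set (Fin n → RR F)) := by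
  obtain ⟨c, hc, hc0, hcd⟩ := exists_leeWt_eq_dLee hC
  obtain ⟨i, hi⟩ : ∃ i, (fun j => c j i) ≠ 0 := by
    by_contra! h
    exact hc0 <| funext fun j => funext fun i => congrFun (h i) j
  refine ⟨i, ?_⟩
  calc dHam (compCode (C : Set (Fin n → RR F)) i)
      ≤ hammingNorm fun j => c j i := dHam_le_hammingNorm (mem_compCode_of_mem hc i) hi
    _ ≤ leeWt c := leeWt_eq_sum_hammingNorm c ▸
        Finset.single_le_sum (f := fun i => hammingNorm fun j => c j i)
          (fun _ _ => Nat.zero_le _) (Finset.mem_univ i)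
    _ = dLee (C : Set (Fin n → RR F)) := hcd

end Code

theorem statement17_general {n : ℕ}
    (F : Type*) [Field F] [Fintype F] [DecidableEq F]
    (C : Submodule (RR F) (Fin n → RR F))
    (hnz : ∀ i, compCode (C : Set (Fin n → RR F)) i ≠ {0})
    (K : ℕ) (hK : Nat.card C = Fintype.card F ^ K)
    (k : Fin 4 → ℕ)
    (hk : ∀ i, Nat.card (compCode (C : Set (Fin n → RR F)) i) = Fintype.card F ^ k i) :
    4 * dLee (C : Set (Fin n → RR F)) + K = 4 * n + 4 ↔
      (∀ i, dHam (compCode (C : Set (Fin n → RR F)) i) + k i = n + 1) ∧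
      ∀ i i', dHam (compCode (C : Set (Fin n → RR F)) i) =
        dHam (compCode (C : Set (Fin n → RR F)) i') := by
  have hex : ∀ i, ∃ x ∈ compCode (C : Set (Fin n → RR F)) i, x ≠ 0 := fun i => by
    by_contra! h
    exact hnz i <| Set.eq_singleton_iff_unique_mem.mpr ⟨mem_compCode_of_mem C.zero_mem i, h⟩
  have hC : ∃ c ∈ C, c ≠ 0 := by
    obtain ⟨x, ⟨c, hc, hcx⟩, hx0⟩ := hex 0
    exact ⟨c, hc, by rintro rfl; exact hx0 (funext fun j => (hcx j).symm)⟩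
  have hKsum : K = ∑ i, k i := Nat.pow_right_injective (Fintype.one_lt_card (α := F)) <| by
    dsimp only
    rw [← Finset.prod_pow_eq_pow_sum, ← hK, card_eq_prod_card_compCode]
    exact Finset.prod_congr rfl fun i _ => hk i
  have hsingleton : ∀ i, dHam (compCode (C : Set (Fin n → RR F)) i) + k i ≤ n + 1 := fun i => by
    simpa using dHam_add_le_of_card_eq_pow (fun _ hx _ hy => sub_mem_compCode hx hy) (hex i) (hk i)
  have key := card_mul_add_sum_eq_iff (fun i => dLee_le_dHam_compCode (hex i)) hsingleton
    (exists_dHam_compCode_le_dLee hC)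
  rw [Fintype.card_fin, ← hKsum] at key
  rw [← key]
  omega

/-- `C` (with `|C| = q^K`, `|C_i| = q^{k_i}`, components nonzero) is MDS
over `R` — i.e. `4·d_L(C) = 4n − K + 4` — iff each component code `C_i` is MDS over
`F_q` — i.e. `d_H(C_i) = n − k_i + 1` — with all the `d_H(C_i)` equal. -/
theorem statement17 {p e n : ℕ} (hp : p.Prime) (he : 0 < e)
    (F : Type*) [Field F] [Fintype F] [DecidableEq F] (hcard : Fintype.card F = p ^ e)
    (C : Submodule (RR F) (Fin n → RR F))
    (hnz : ∀ i, compCode (C : Set (Fin n → RR F)) i ≠ {0})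
    (K : ℕ) (hK : Nat.card C = Fintype.card F ^ K)
    (k : Fin 4 → ℕ)
    (hk : ∀ i, Nat.card (compCode (C : Set (Fin n → RR F)) i) = Fintype.card F ^ k i) :
    4 * dLee (C : Set (Fin n → RR F)) + K = 4 * n + 4 ↔
      (∀ i, dHam (compCode (C : Set (Fin n → RR F)) i) + k i = n + 1) ∧
      ∀ i i', dHam (compCode (C : Set (Fin n → RR F)) i) =
        dHam (compCode (C : Set (Fin n → RR F)) i') :=
  statement17_general F C hnz K hK k hk
end
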